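/- arXiv:1205.3674 — 9 statements merged into one kernel-verified Lean document; each statement's English description precedes it below -/
import Mathlib

section
/- A sequence (x_n) of real numbers is upward half Cauchy if and only if every subsequence of (x_n) is upward half quasi-Cauchy. -/
def UpHalfCauchy (x : ℕ → ℝ) : Prop :=
  ∀ ε > 0, ∃ n₀ : ℕ, ∀ n m : ℕ, n₀ ≤ n → n ≤ m → x n - x m < ε

def DownHalfCauchy (x : ℕ → ℝ) : Prop :=
  ∀ ε > 0, ∃ n₀ : ℕ, ∀ n m : ℕ, n₀ ≤ n → n ≤ m → x m - x n < ε

def UpHalfQuasiCauchy (x : ℕ → ℝ) : Prop :=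
  ∀ ε > 0, ∃ n₀ : ℕ, ∀ n : ℕ, n₀ ≤ n → x n - x (n + 1) < ε

def DownHalfQuasiCauchy (x : ℕ → ℝ) : Prop :=
  ∀ ε > 0, ∃ n₀ : ℕ, ∀ n : ℕ, n₀ ≤ n → x (n + 1) - x n < ε

def QuasiCauchy (x : ℕ → ℝ) : Prop :=
  ∀ ε > 0, ∃ n₀ : ℕ, ∀ n : ℕ, n₀ ≤ n → |x (n + 1) - x n| < ε

/-
If `x` is not upward half Cauchy, there are `ε > 0` and arbitrarily late pairs `n < m` with
`x n - x m ≥ ε`. Choosing such pairs one after another, each starting beyond the end of the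
previous one, and listing their endpoints in order gives a subsequence that drops by at least `ε`
at every even step, so it is not upward half quasi-Cauchy. Conversely, a subsequence of an upward
half Cauchy sequence is upward half Cauchy, hence upward half quasi-Cauchy.
-/

theorem UpHalfCauchy.upHalfQuasiCauchy {x : ℕ → ℝ} (hx : UpHalfCauchy x) :
    UpHalfQuasiCauchy x := fun ε hε ↦ by
  obtain ⟨n₀, hn₀⟩ := hx ε hε
  exact ⟨n₀, fun n hn ↦ hn₀ n (n + 1) hn n.le_succ⟩

theorem UpHalfCauchy.comp_strictMono {x : ℕ → ℝ} (hx : UpHalfCauchy x) {φ : ℕ → ℕ}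
    (hφ : StrictMono φ) : UpHalfCauchy (x ∘ φ) := fun ε hε ↦ by
  obtain ⟨n₀, hn₀⟩ := hx ε hε
  exact ⟨n₀, fun n m hn hnm ↦ hn₀ (φ n) (φ m) (hn.trans hφ.le_apply) (hφ.monotone hnm)⟩

theorem exists_late_pair_of_not_upHalfCauchy {x : ℕ → ℝ} (hx : ¬UpHalfCauchy x) :
    ∃ ε > 0, ∀ N, ∃ n m, N ≤ n ∧ n < m ∧ ε ≤ x n - x m := by
  simp only [UpHalfCauchy, not_forall, not_exists, not_lt] at hx
  obtain ⟨ε, hε, hbad⟩ := hx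
  refine ⟨ε, hε, fun N ↦ ?_⟩
  obtain ⟨n, m, hNn, hnm, hdrop⟩ := hbad N
  refine ⟨n, m, hNn, hnm.lt_of_ne ?_, hdrop⟩
  rintro rfl
  simp only [sub_self] at hdrop
  exact hdrop.not_gt hε

theorem exists_strictMono_forall_even_odd {P : ℕ → ℕ → Prop}
    (h : ∀ N, ∃ n m, N ≤ n ∧ n < m ∧ P n m) :
    ∃ φ : ℕ → ℕ, StrictMono φ ∧ ∀ k, P (φ (2 * k)) (φ (2 * k + 1)) := by
  choose a b hNa hab hP using h
  let start : ℕ → ℕ := fun k ↦ (fun N ↦ b N + 1)^[k] 0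
  have start_succ (k : ℕ) : start (k + 1) = b (start k) + 1 :=
    Function.iterate_succ_apply' _ k 0
  let φ : ℕ → ℕ := fun n ↦ if n % 2 = 0 then a (start (n / 2)) else b (start (n / 2))
  have φ_even (k : ℕ) : φ (2 * k) = a (start k) := by simp [φ]
  have φ_odd (k : ℕ) : φ (2 * k + 1) = b (start k) := by
    simp [φ, Nat.mul_add_div]
  refine ⟨φ, strictMono_nat_of_lt_succ fun n ↦ ?_, fun k ↦ by simpa [φ_even, φ_odd] using hP _⟩
  obtain ⟨k, rfl | rfl⟩ := Nat.even_or_odd' n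
  · rw [φ_even, φ_odd]
    exact hab _
  · rw [φ_odd, show 2 * k + 1 + 1 = 2 * (k + 1) by ring, φ_even, start_succ]
    exact Nat.lt_of_succ_le (hNa _)

theorem stmt_0 (x : ℕ → ℝ) :
    UpHalfCauchy x ↔
      ∀ φ : ℕ → ℕ, StrictMono φ → UpHalfQuasiCauchy (x ∘ φ) := by
  refine ⟨fun hx φ hφ ↦ (hx.comp_strictMono hφ).upHalfQuasiCauchy, fun hsub ↦ ?_⟩
  by_contra hx
  obtain ⟨ε, hε, hbad⟩ := exists_late_pair_of_not_upHalfCauchy hx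
  obtain ⟨φ, hφ, hdrop⟩ := exists_strictMono_forall_even_odd hbad
  obtain ⟨n₀, hn₀⟩ := hsub φ hφ ε hε
  exact (hn₀ (2 * n₀) (by omega)).not_ge (hdrop n₀)
end

section
/- If f : ℝ → ℝ is upward half Cauchy continuous on a set E ⊆ ℝ (i.e., f maps upward half Cauchy sequences of points of E to upward half Cauchy sequences), then f is sequentially continuous on E: for any sequence (x_n) of points in E converging to a point ℓ ∈ E, the sequence (f(x_n)) converges to f(ℓ). -/
/-!
Let `x → ℓ` in `E`. The sequence `x 0, ℓ, x 1, ℓ, x 2, ℓ, …` still lies in `E` and converges to `ℓ`,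
so it is Cauchy, hence upward half Cauchy. Its image `f (x 0), f ℓ, f (x 1), f ℓ, …` is then upward
half Cauchy; comparing consecutive terms `f ℓ, f (x n), f ℓ` bounds `f (x n) - f ℓ` from both sides.
-/

open Filter Topology

theorem UpHalfCauchy.of_cauchySeq {x : ℕ → ℝ} (hx : CauchySeq x) : UpHalfCauchy x := by
  intro ε hε
  obtain ⟨n₀, hn₀⟩ := Metric.cauchySeq_iff.1 hx ε hε
  exact ⟨n₀, fun n m hn hnm => (le_abs_self _).trans_lt (hn₀ n hn m (hn.trans hnm))⟩

section Interleave

variable {α β : Type*}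

def interleave (a : ℕ → α) (c : α) (n : ℕ) : α :=
  if Even n then a (n / 2) else c

@[simp]
theorem interleave_two_mul (a : ℕ → α) (c : α) (n : ℕ) : interleave a c (2 * n) = a n := by
  simp [interleave]

@[simp]
theorem interleave_two_mul_add_one (a : ℕ → α) (c : α) (n : ℕ) :
    interleave a c (2 * n + 1) = c := by
  simp [interleave]

theorem comp_interleave (g : α → β) (a : ℕ → α) (c : α) :
    (fun n => g (interleave a c n)) = interleave (g ∘ a) (g c) := by
  ext n
  unfold interleave
  split_ifs <;> rfl

theorem interleave_mem {E : Set α} {a : ℕ → α} {c : α} (ha : ∀ n, a n ∈ E) (hc : c ∈ E) (n : ℕ) :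
    interleave a c n ∈ E := by
  unfold interleave
  split_ifs
  exacts [ha _, hc]

theorem tendsto_interleave [TopologicalSpace α] {a : ℕ → α} {c : α}
    (ha : Tendsto a atTop (𝓝 c)) : Tendsto (interleave a c) atTop (𝓝 c) :=
  (ha.comp (Nat.tendsto_div_const_atTop two_ne_zero)).if' tendsto_const_nhds

end Interleave

theorem tendsto_of_upHalfCauchy_interleave {a : ℕ → ℝ} {c : ℝ}
    (h : UpHalfCauchy (interleave a c)) : Tendsto a atTop (𝓝 c) := by
  rw [Metric.tendsto_atTop]
  intro ε hε
  obtain ⟨n₀, hn₀⟩ := h ε hε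
  refine ⟨n₀ + 1, fun n hn => ?_⟩
  obtain ⟨k, rfl⟩ : ∃ k, n = k + 1 := ⟨n - 1, by omega⟩
  have above : a (k + 1) - c < ε := by
    simpa only [interleave_two_mul_add_one, interleave_two_mul] using
      hn₀ (2 * (k + 1)) (2 * (k + 1) + 1) (by omega) (by omega)
  have below : c - a (k + 1) < ε := by
    simpa only [interleave_two_mul_add_one, interleave_two_mul] using
      hn₀ (2 * k + 1) (2 * (k + 1)) (by omega) (by omega)
  rw [Real.dist_eq, abs_sub_lt_iff]
  exact ⟨above, below⟩

theorem stmt_7 (f : ℝ → ℝ) (E : Set ℝ)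
    (hf : ∀ x : ℕ → ℝ, (∀ n, x n ∈ E) → UpHalfCauchy x → UpHalfCauchy (fun n => f (x n)))
    (x : ℕ → ℝ) (hx : ∀ n, x n ∈ E) (ℓ : ℝ) (hℓ : ℓ ∈ E)
    (hconv : Filter.Tendsto x Filter.atTop (nhds ℓ)) :
    Filter.Tendsto (fun n => f (x n)) Filter.atTop (nhds (f ℓ)) := by
  have hy := hf (interleave x ℓ) (interleave_mem hx hℓ)
    (UpHalfCauchy.of_cauchySeq (tendsto_interleave hconv).cauchySeq)
  rw [comp_interleave] at hy
  exact tendsto_of_upHalfCauchy_interleave hy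
end

section
/- If f : ℝ → ℝ is downward half Cauchy continuous on a set E ⊆ ℝ, then f is sequentially continuous on E: for any sequence (x_n) of points in E converging to a point ℓ ∈ E, the sequence (f(x_n)) converges to f(ℓ). -/
/-!
Interleave `x` with the constant sequence `ℓ`: the result `y = (x₀, ℓ, x₁, ℓ, …)` still converges
to `ℓ`, so it is Cauchy and in particular downward half Cauchy, hence so is `f ∘ y`. The two
downward half Cauchy inequalities `f (x n) - f ℓ < ε` (from `ℓ` to `x n`) and `f ℓ - f (x n) < ε`
(from `x n` to the next `ℓ`) together force `f (x n) → f ℓ`.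
-/

open Filter Topology

theorem CauchySeq.downHalfCauchy {x : ℕ → ℝ} (hx : CauchySeq x) : DownHalfCauchy x := by
  intro ε hε
  obtain ⟨N, hN⟩ := Metric.cauchySeq_iff.1 hx ε hε
  refine ⟨N, fun n m hn hnm => ?_⟩
  calc x m - x n ≤ |x m - x n| := le_abs_self _
    _ = dist (x m) (x n) := (Real.dist_eq _ _).symm
    _ < ε := hN m (hn.trans hnm) n hn

theorem DownHalfCauchy.tendsto_even_of_odd_eq {y : ℕ → ℝ} {c : ℝ} (hy : DownHalfCauchy y)
    (hodd : ∀ n, y (2 * n + 1) = c) : Tendsto (fun n => y (2 * n)) atTop (𝓝 c) := by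
  refine (tendsto_add_atTop_iff_nat 1).1 (Metric.tendsto_atTop.2 fun ε hε => ?_)
  obtain ⟨n₀, hn₀⟩ := hy ε hε
  refine ⟨n₀, fun n hn => ?_⟩
  have hup : y (2 * (n + 1)) - c < ε := by
    simpa only [hodd] using hn₀ (2 * n + 1) (2 * (n + 1)) (by omega) (by omega)
  have hdown : c - y (2 * (n + 1)) < ε := by
    simpa only [hodd] using hn₀ (2 * (n + 1)) (2 * (n + 1) + 1) (by omega) (by omega)
  rw [Real.dist_eq, abs_lt]
  constructor <;> linarith

section Interleave

variable {α : Type*}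

def interleaveConst (x : ℕ → α) (c : α) (n : ℕ) : α :=
  if Even n then x (n / 2) else c

variable {x : ℕ → α} {c : α}

@[simp]
theorem interleaveConst_two_mul (n : ℕ) : interleaveConst x c (2 * n) = x n := by
  simp [interleaveConst]

@[simp]
theorem interleaveConst_two_mul_add_one (n : ℕ) : interleaveConst x c (2 * n + 1) = c := by
  simp [interleaveConst]

theorem interleaveConst_mem {s : Set α} (hx : ∀ n, x n ∈ s) (hc : c ∈ s) (n : ℕ) :
    interleaveConst x c n ∈ s := by
  unfold interleaveConst
  split_ifs
  exacts [hx _, hc]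

theorem tendsto_interleaveConst [TopologicalSpace α] (hx : Tendsto x atTop (𝓝 c)) :
    Tendsto (interleaveConst x c) atTop (𝓝 c) :=
  (hx.comp (Nat.tendsto_div_const_atTop two_ne_zero)).if' tendsto_const_nhds

end Interleave

theorem stmt_8 (f : ℝ → ℝ) (E : Set ℝ)
    (hf : ∀ x : ℕ → ℝ, (∀ n, x n ∈ E) → DownHalfCauchy x → DownHalfCauchy (fun n => f (x n)))
    (x : ℕ → ℝ) (hx : ∀ n, x n ∈ E) (ℓ : ℝ) (hℓ : ℓ ∈ E)
    (hconv : Filter.Tendsto x Filter.atTop (nhds ℓ)) :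
    Filter.Tendsto (fun n => f (x n)) Filter.atTop (nhds (f ℓ)) := by
  have hy : DownHalfCauchy (interleaveConst x ℓ) :=
    (tendsto_interleaveConst hconv).cauchySeq.downHalfCauchy
  have hfy := hf _ (interleaveConst_mem hx hℓ) hy
  simpa only [interleaveConst_two_mul] using
    hfy.tendsto_even_of_odd_eq fun n => congrArg f (interleaveConst_two_mul_add_one n)
end

section
/- If (f_n) is a sequence of functions from E ⊆ ℝ to ℝ, each upward half Cauchy continuous on E, and (f_n) converges uniformly on E to f, then f is upward half Cauchy continuous on E. -/
theorem upHalfCauchy_of_forall_approx {v : ℕ → ℝ}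
    (h : ∀ ε > 0, ∃ u : ℕ → ℝ, UpHalfCauchy u ∧ ∀ k, |u k - v k| < ε) : UpHalfCauchy v := by
  intro ε hε
  obtain ⟨u, hu, hclose⟩ := h (ε / 3) (by positivity)
  obtain ⟨n₀, hn₀⟩ := hu (ε / 3) (by positivity)
  refine ⟨n₀, fun n m hn₀n hnm => ?_⟩
  have hvn := (abs_sub_lt_iff.mp (hclose n)).2
  have hvm := (abs_sub_lt_iff.mp (hclose m)).1
  linarith [hn₀ n m hn₀n hnm]

theorem stmt_11 (E : Set ℝ) (f : ℕ → ℝ → ℝ) (g : ℝ → ℝ)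
    (hcont : ∀ n, ∀ x : ℕ → ℝ, (∀ k, x k ∈ E) → UpHalfCauchy x →
      UpHalfCauchy (fun k => f n (x k)))
    (hunif : ∀ ε > (0 : ℝ), ∃ N : ℕ, ∀ n ≥ N, ∀ x ∈ E, |f n x - g x| < ε) :
    ∀ x : ℕ → ℝ, (∀ k, x k ∈ E) → UpHalfCauchy x →
      UpHalfCauchy (fun k => g (x k)) := by
  intro x hxE hx
  refine upHalfCauchy_of_forall_approx fun ε hε => ?_
  obtain ⟨N, hN⟩ := hunif ε hε
  exact ⟨_, hcont N x hxE hx, fun k => hN N le_rfl (x k) (hxE k)⟩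
end

section
/- If (f_n) is a sequence of functions from E ⊆ ℝ to ℝ, each upward half quasi-Cauchy continuous on E, and (f_n) converges uniformly on E to f, then f is upward half quasi-Cauchy continuous on E. -/
theorem UpHalfQuasiCauchy.of_forall_abs_sub_lt {a : ℕ → ℝ}
    (h : ∀ ε > 0, ∃ b, UpHalfQuasiCauchy b ∧ ∀ k, |a k - b k| < ε) : UpHalfQuasiCauchy a := by
  intro ε hε
  obtain ⟨b, hb, hab⟩ := h (ε / 3) (by positivity)
  obtain ⟨n₀, hn₀⟩ := hb (ε / 3) (by positivity)
  refine ⟨n₀, fun n hn => ?_⟩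
  have hclose := abs_lt.mp (hab n)
  have hclose' := abs_lt.mp (hab (n + 1))
  linarith [hn₀ n hn]

theorem stmt_12 (E : Set ℝ) (f : ℕ → ℝ → ℝ) (g : ℝ → ℝ)
    (hcont : ∀ n, ∀ x : ℕ → ℝ, (∀ k, x k ∈ E) → UpHalfQuasiCauchy x →
      UpHalfQuasiCauchy (fun k => f n (x k)))
    (hunif : ∀ ε > (0 : ℝ), ∃ N : ℕ, ∀ n ≥ N, ∀ x ∈ E, |f n x - g x| < ε) :
    ∀ x : ℕ → ℝ, (∀ k, x k ∈ E) → UpHalfQuasiCauchy x →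
      UpHalfQuasiCauchy (fun k => g (x k)) := by
  intro x hxE hx
  refine UpHalfQuasiCauchy.of_forall_abs_sub_lt fun ε hε => ?_
  obtain ⟨N, hN⟩ := hunif ε hε
  exact ⟨_, hcont N x hxE hx, fun k => abs_sub_comm (f N (x k)) (g (x k)) ▸ hN N le_rfl _ (hxE k)⟩
end

section
/- If (f_n) is a sequence of functions from E ⊆ ℝ to ℝ, each downward half quasi-Cauchy continuous on E, and (f_n) converges uniformly on E to f, then f is downward half quasi-Cauchy continuous on E. -/
theorem DownHalfQuasiCauchy.of_uniform_approx {u : ℕ → ℝ}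
    (h : ∀ δ > 0, ∃ v, DownHalfQuasiCauchy v ∧ ∀ k, |v k - u k| < δ) :
    DownHalfQuasiCauchy u := by
  intro ε hε
  obtain ⟨v, hv, hvu⟩ := h (ε / 3) (by positivity)
  obtain ⟨n₀, hn₀⟩ := hv (ε / 3) (by positivity)
  refine ⟨n₀, fun n hn => ?_⟩
  have hsucc := abs_lt.mp (hvu (n + 1))
  have hcurr := abs_lt.mp (hvu n)
  linarith [hn₀ n hn]

theorem stmt_13 (E : Set ℝ) (f : ℕ → ℝ → ℝ) (g : ℝ → ℝ)
    (hcont : ∀ n, ∀ x : ℕ → ℝ, (∀ k, x k ∈ E) → DownHalfQuasiCauchy x →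
      DownHalfQuasiCauchy (fun k => f n (x k)))
    (hunif : ∀ ε > (0 : ℝ), ∃ N : ℕ, ∀ n ≥ N, ∀ x ∈ E, |f n x - g x| < ε) :
    ∀ x : ℕ → ℝ, (∀ k, x k ∈ E) → DownHalfQuasiCauchy x →
      DownHalfQuasiCauchy (fun k => g (x k)) := by
  intro x hxE hx
  refine DownHalfQuasiCauchy.of_uniform_approx fun δ hδ => ?_
  obtain ⟨N, hN⟩ := hunif δ hδ
  exact ⟨_, hcont N x hxE hx, fun k => hN N le_rfl (x k) (hxE k)⟩
end

section
/- If E ⊆ ℝ is upward half quasi-Cauchy compact and f : ℝ → ℝ is upward half quasi-Cauchy continuous on E, then f(E) is upward half quasi-Cauchy compact. -/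
theorem exists_subseq_of_mem_image {α β : Type*} {P : (ℕ → α) → Prop} {Q : (ℕ → β) → Prop}
    {E : Set α} {f : α → β}
    (hE : ∀ x : ℕ → α, (∀ n, x n ∈ E) → ∃ φ : ℕ → ℕ, StrictMono φ ∧ P (x ∘ φ))
    (hf : ∀ x : ℕ → α, (∀ n, x n ∈ E) → P x → Q (f ∘ x))
    (y : ℕ → β) (hy : ∀ n, y n ∈ f '' E) :
    ∃ φ : ℕ → ℕ, StrictMono φ ∧ Q (y ∘ φ) := by
  choose x hxE hfx using hy
  obtain ⟨φ, hφ, hxφ⟩ := hE x hxE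
  have hyφ : y ∘ φ = f ∘ (x ∘ φ) := funext fun n => (hfx (φ n)).symm
  exact ⟨φ, hφ, hyφ ▸ hf (x ∘ φ) (fun n => hxE (φ n)) hxφ⟩

theorem stmt_14 (E : Set ℝ) (f : ℝ → ℝ)
    (hE : ∀ x : ℕ → ℝ, (∀ n, x n ∈ E) →
      ∃ φ : ℕ → ℕ, StrictMono φ ∧ UpHalfQuasiCauchy (x ∘ φ))
    (hf : ∀ x : ℕ → ℝ, (∀ n, x n ∈ E) → UpHalfQuasiCauchy x →
      UpHalfQuasiCauchy (fun n => f (x n))) :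
    ∀ y : ℕ → ℝ, (∀ n, y n ∈ f '' E) →
      ∃ φ : ℕ → ℕ, StrictMono φ ∧ UpHalfQuasiCauchy (y ∘ φ) :=
  exists_subseq_of_mem_image hE hf
end

section
/- If E ⊆ ℝ is downward half Cauchy compact and f : ℝ → ℝ is downward half Cauchy continuous on E, then f(E) is downward half Cauchy compact. -/
theorem stmt_15 (E : Set ℝ) (f : ℝ → ℝ)
    (hE : ∀ x : ℕ → ℝ, (∀ n, x n ∈ E) →
      ∃ φ : ℕ → ℕ, StrictMono φ ∧ DownHalfCauchy (x ∘ φ))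
    (hf : ∀ x : ℕ → ℝ, (∀ n, x n ∈ E) → DownHalfCauchy x →
      DownHalfCauchy (fun n => f (x n))) :
    ∀ y : ℕ → ℝ, (∀ n, y n ∈ f '' E) →
      ∃ φ : ℕ → ℕ, StrictMono φ ∧ DownHalfCauchy (y ∘ φ) := by
  intro y hy
  choose x hxE hfx using hy
  obtain ⟨φ, hφ, hxφ⟩ := hE x hxE
  have hyφ : (fun n => f ((x ∘ φ) n)) = y ∘ φ := funext fun n => hfx (φ n)
  exact ⟨φ, hφ, hyφ ▸ hf (x ∘ φ) (fun n => hxE (φ n)) hxφ⟩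
end

section
/- Every bounded subset of ℝ is upward half quasi-Cauchy compact: if E ⊆ ℝ is bounded, then every sequence of points in E has an upward half quasi-Cauchy subsequence. -/
open Filter Topology

theorem UpHalfQuasiCauchy.of_tendsto {x : ℕ → ℝ} {a : ℝ} (hx : Tendsto x atTop (𝓝 a)) :
    UpHalfQuasiCauchy x := by
  intro ε hε
  have hdiff : Tendsto (fun n => x n - x (n + 1)) atTop (𝓝 0) := by
    simpa using hx.sub (hx.comp (tendsto_add_atTop_nat 1))
  exact eventually_atTop.mp (hdiff.eventually (gt_mem_nhds hε))

theorem stmt_16 (E : Set ℝ) (hE : Bornology.IsBounded E)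
    (x : ℕ → ℝ) (hx : ∀ n, x n ∈ E) :
    ∃ φ : ℕ → ℕ, StrictMono φ ∧ UpHalfQuasiCauchy (x ∘ φ) := by
  obtain ⟨a, -, φ, hφ, hlim⟩ := tendsto_subseq_of_bounded hE hx
  exact ⟨φ, hφ, UpHalfQuasiCauchy.of_tendsto hlim⟩
end
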